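/- In a weighted star graph with center 0 and leaf nodes with degrees k_1,...,k_n (link weight c_{0i} = k_i), the effective resistance between leaf nodes i and j is ω_{ij} = 1/k_i + 1/k_j, and for any subset V of the leaves the vector with entries p_i = 1/2 - (|V| - 2)k_i/(4 m_V), where 2m_V = ∑_{i∈V} k_i, satisfies Ω_{VV} p = α u for some constant α. -/

import Mathlib

open Finset Matrix

/-!
The quadratic form of a generalized inverse `G` of a symmetric `Q` (i.e. `Q G Q = Q`) is
determined on the range of `Q`: if `Q y = x` then `xᵀ G x = yᵀ x`. For the star Laplacian the
potential `y = eᵢ / kᵢ - eⱼ / kⱼ` solves `Q y = eᵢ - eⱼ`, which gives `ωᵢⱼ = 1/kᵢ + 1/kⱼ`.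
Since `ω` is then of the form `rᵢ + rⱼ` off the diagonal, `(Ω p)ᵢ` equals
`rᵢ (∑ p - 2 pᵢ)` plus a term independent of `i`, and the choice of `p` makes
`∑ p = 1` and `1 - 2 pᵢ` proportional to `kᵢ = 1 / rᵢ`.
-/

theorem Matrix.dotProduct_mulVec_eq_of_mul_mul_eq {ι R : Type*} [Fintype ι] [CommRing R]
    {Q G : Matrix ι ι R} (hQ : Q.IsSymm) (hG : Q * G * Q = Q) {x y : ι → R}
    (hy : Q *ᵥ y = x) : x ⬝ᵥ G *ᵥ x = y ⬝ᵥ x := by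
  subst hy
  calc Q *ᵥ y ⬝ᵥ G *ᵥ (Q *ᵥ y) = y ᵥ* Q ⬝ᵥ (G * Q) *ᵥ y := by
        rw [← mulVec_transpose, hQ.eq, mulVec_mulVec]
    _ = y ⬝ᵥ (Q * G * Q) *ᵥ y := by rw [← dotProduct_mulVec, mulVec_mulVec, Matrix.mul_assoc]
    _ = y ⬝ᵥ Q *ᵥ y := by rw [hG]

/-- The quadratic form of `G` on `e_a - e_b`; for `G` a generalized inverse of a Laplacian this
is the effective resistance between `a` and `b`. -/
def effectiveResistance {ι R : Type*} [Fintype ι] [DecidableEq ι] [Ring R]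
    (G : Matrix ι ι R) (a b : ι) : R :=
  (Pi.single a 1 - Pi.single b 1) ⬝ᵥ G *ᵥ (Pi.single a 1 - Pi.single b 1)

@[simp]
theorem effectiveResistance_self {ι R : Type*} [Fintype ι] [DecidableEq ι] [Ring R]
    (G : Matrix ι ι R) (a : ι) : effectiveResistance G a a = 0 := by
  simp [effectiveResistance]

/-- The Laplacian of the star with center `none` and a link of weight `k i` to each leaf `some i`. -/
def starLaplacian {ι R : Type*} [Fintype ι] [DecidableEq ι] [Ring R] (k : ι → R) :
    Matrix (Option ι) (Option ι) R :=
  Matrix.of fun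
    | none, none => ∑ i, k i
    | none, some j => -k j
    | some i, none => -k i
    | some i, some j => if i = j then k i else 0

theorem starLaplacian_isSymm {ι R : Type*} [Fintype ι] [DecidableEq ι] [Ring R] (k : ι → R) :
    (starLaplacian k).IsSymm := by
  ext (_ | i) (_ | j) <;> simp only [starLaplacian, transpose_apply, of_apply]
  split_ifs with hji hij hij
  · rw [hji]
  · exact absurd hji.symm hij
  · exact absurd hij.symm hji
  · rfl

section StarLaplacian

variable {ι K : Type*} [Fintype ι] [DecidableEq ι] [Field K] (k : ι → K)

theorem starLaplacian_mulVec_single_some {i : ι} (hi : k i ≠ 0) :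
    starLaplacian k *ᵥ Pi.single (some i) (k i)⁻¹ = Pi.single (some i) 1 - Pi.single none 1 := by
  ext (_ | j)
  · simp [starLaplacian, hi]
  · rcases eq_or_ne j i with rfl | hji <;> simp [starLaplacian, *]

theorem effectiveResistance_starLaplacian {G : Matrix (Option ι) (Option ι) K}
    (hG : starLaplacian k * G * starLaplacian k = starLaplacian k) {i j : ι} (hij : i ≠ j)
    (hi : k i ≠ 0) (hj : k j ≠ 0) :
    effectiveResistance G (some i) (some j) = 1 / k i + 1 / k j := by
  have hpotential : starLaplacian k *ᵥ (Pi.single (some i) (k i)⁻¹ - Pi.single (some j) (k j)⁻¹)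
      = Pi.single (some i) 1 - Pi.single (some j) 1 := by
    rw [mulVec_sub, starLaplacian_mulVec_single_some k hi, starLaplacian_mulVec_single_some k hj]
    abel
  rw [effectiveResistance,
    dotProduct_mulVec_eq_of_mul_mul_eq (starLaplacian_isSymm k) hG hpotential]
  simp [hij, hij.symm, one_div]

end StarLaplacian

theorem sum_mul_eq_of_offDiag_eq_add {ι R : Type*} [DecidableEq ι] [CommRing R]
    (V : Finset ι) {ω : ι → ι → R} {r : ι → R} (hω : ∀ i j, i ≠ j → ω i j = r i + r j)
    (hω_self : ∀ i, ω i i = 0) (p : ι → R) {i : ι} (hi : i ∈ V) :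
    ∑ j ∈ V, ω i j * p j = r i * (∑ j ∈ V, p j - 2 * p i) + ∑ j ∈ V, r j * p j := by
  have hsplit : ∀ j ∈ V, ω i j * p j = (r i + r j) * p j - if j = i then 2 * r i * p i else 0 := by
    intro j _
    rcases eq_or_ne j i with rfl | hji
    · rw [hω_self, if_pos rfl]; ring
    · rw [hω i j hji.symm, if_neg hji]; ring
  rw [sum_congr rfl hsplit, sum_sub_distrib, sum_ite_eq' V i, if_pos hi, mul_sub, mul_sum]
  simp only [add_mul, sum_add_distrib]
  ring

/-- The weights `p_j = 1/2 - (|V| - 2) k_j / (4 m_V)`, with `2 m_V = ∑_{l ∈ V} k_l`. -/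
def localWeight {ι K : Type*} [Field K] (V : Finset ι) (k : ι → K) (j : ι) : K :=
  1 / 2 - ((#V : K) - 2) * k j / (2 * ∑ l ∈ V, k l)

section LocalWeight

variable {ι K : Type*} [Field K] [CharZero K] {V : Finset ι} {k : ι → K}

theorem sum_localWeight (hV : ∑ l ∈ V, k l ≠ 0) : ∑ j ∈ V, localWeight V k j = 1 := by
  simp only [localWeight, sum_sub_distrib, sum_const, nsmul_eq_mul, ← sum_div, ← mul_sum]
  field_simp
  ring

theorem one_sub_two_mul_localWeight (hV : ∑ l ∈ V, k l ≠ 0) (j : ι) :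
    1 - 2 * localWeight V k j = ((#V : K) - 2) * k j / ∑ l ∈ V, k l := by
  rw [localWeight]
  field_simp
  ring

end LocalWeight

theorem weighted_star_resistance_and_local_solution {n : ℕ} (k : Fin n → ℝ)
    (hk : ∀ i, 0 < k i)
    (Q Qd : Matrix (Option (Fin n)) (Option (Fin n)) ℝ)
    (hQ : ∀ a b, Q a b = match a, b with
      | none, none => ∑ i, k i
      | none, some j => -k j
      | some i, none => -k i
      | some i, some j => if i = j then k i else 0)
    (h1 : Q * Qd * Q = Q)
    (Ω : Matrix (Option (Fin n)) (Option (Fin n)) ℝ)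
    (hΩ : ∀ a b, Ω a b =
      (Pi.single a 1 - Pi.single b 1) ⬝ᵥ Qd *ᵥ (Pi.single a 1 - Pi.single b 1)) :
    (∀ i j : Fin n, i ≠ j → Ω (some i) (some j) = 1 / k i + 1 / k j)
      ∧ ∀ V : Finset (Fin n), ∃ α : ℝ, ∀ i ∈ V,
          ∑ j ∈ V, Ω (some i) (some j) *
            (1 / 2 - ((V.card : ℝ) - 2) * k j / (2 * ∑ l ∈ V, k l)) = α := by
  have hQ_star : Q = starLaplacian k := by
    ext (_ | i) (_ | j) <;> rw [hQ] <;> rfl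
  have hΩ_eq : ∀ a b, Ω a b = effectiveResistance Qd a b := hΩ
  have hoff : ∀ i j : Fin n, i ≠ j → Ω (some i) (some j) = 1 / k i + 1 / k j := fun i j hij => by
    rw [hΩ_eq]
    exact effectiveResistance_starLaplacian k (hQ_star ▸ h1) hij (hk i).ne' (hk j).ne'
  refine ⟨hoff, fun V => ⟨∑ j ∈ V, 1 / k j * localWeight V k j + ((#V : ℝ) - 2) / ∑ l ∈ V, k l,
    fun i hi => ?_⟩⟩
  have hV : ∑ l ∈ V, k l ≠ 0 := (sum_pos (fun l _ => hk l) ⟨i, hi⟩).ne'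
  change ∑ j ∈ V, Ω (some i) (some j) * localWeight V k j = _
  rw [sum_mul_eq_of_offDiag_eq_add V hoff (fun j => by simp [hΩ_eq]) _ hi, sum_localWeight hV,
    one_sub_two_mul_localWeight hV, add_comm]
  field_simp [(hk i).ne']
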